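/- In a solid, if e(z) ≤ e(y), then x·(y + e(z)) = x·y + x·e(z). -/

import Mathlib

structure Assembly (A : Type*) where
  add : A → A → A
  e : A → A
  neg : A → A
  add_assoc : ∀ x y z, add x (add y z) = add (add x y) z
  add_comm : ∀ x y, add x y = add y x
  add_e : ∀ x, add x (e x) = x
  e_max : ∀ x f, add x f = x → add (e x) f = e x
  add_neg : ∀ x, add x (neg x) = e x
  e_neg : ∀ x, e (neg x) = e x
  e_add : ∀ x y, e (add x y) = e x ∨ e (add x y) = e y

structure OrderedAssembly (A : Type*) extends Assembly A where
  le : A → A → Prop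
  le_refl : ∀ x, le x x
  le_antisymm : ∀ x y, le x y → le y x → x = y
  le_trans : ∀ x y z, le x y → le y z → le x z
  le_total : ∀ x y, le x y ∨ le y x
  add_le_add : ∀ x y z, le x y → le (add x z) (add y z)
  le_e : ∀ x y, add y (e x) = e x → le y (e x) ∧ le (neg y) (e x)

structure Solid (A : Type*) extends OrderedAssembly A where
  mul : A → A → A
  u : A → A
  inv : A → A
  mul_assoc : ∀ x y z, mul x (mul y z) = mul (mul x y) z
  mul_comm : ∀ x y, mul x y = mul y x
  mul_u : ∀ x, x ≠ e x → mul x (u x) = x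
  u_max : ∀ x, x ≠ e x → ∀ v, mul x v = x → mul (u x) v = u x
  mul_inv : ∀ x, x ≠ e x → mul x (inv x) = u x
  u_inv : ∀ x, x ≠ e x → u (inv x) = u x
  u_mul : ∀ x y, x ≠ e x → y ≠ e y →
    u (mul x y) = u x ∨ u (mul x y) = u y
  compat_mul : ∀ x y z, le (e x) x → e x ≠ x → le y z → le (mul x y) (mul x z)
  amplification : ∀ x y z, le (e y) y → le y z → le (mul (e x) y) (mul (e x) z)
  escala : ∀ x y, ∃ z, mul (e x) y = e z
  e_mul : ∀ x y, e (mul x y) = add (mul (e x) y) (mul (e y) x)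
  e_u : ∀ x, x ≠ e x → e (u x) = mul (e x) (inv x)
  dist : ∀ x y z, add (mul x y) (mul x z) =
    add (add (mul x (add y z)) (mul (e x) y)) (mul (e x) z)
  neg_mul : ∀ x y, neg (mul x y) = mul (neg x) y
  zero : A
  add_zero : ∀ x, add x zero = x
  one : A
  one_mul : ∀ x, mul one x = x
  M : A
  e_add_M : ∀ x, add (e x) M = M
  exists_neutrix : ∃ x, e x ≠ zero ∧ e x ≠ M
  decomp : ∀ x, ∃ a, x = add a (e x) ∧ e a = zero
  dense : ∀ x y, x = e x → y = e y → le x y → x ≠ y →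
    ∃ z, z ≠ e z ∧ le x z ∧ x ≠ z ∧ le z y ∧ z ≠ y

/-! Since `e z ≤ e y`, the neutrix `e z` is absorbed by `y`, so the left-hand side is `x·y`.
The axiom `dist` rewrites the right-hand side as `x·y + e(x)·y + e(x)·e(z)`, and both correction
terms are absorbed by `x·y`: `e(x)·y` is an idempotent summand of `e(x·y) = e(x)·y + e(y)·x`, and
`e(x)·e(z) ≤ e(x)·e(y)` by amplification, where `e(x)·e(y)` is a summand of
`e(e(x)·y) = e(x)·y`. -/

namespace Assembly

variable {A : Type*} (S : Assembly A)

theorem add_eq_left_trans {w f g : A} (hwf : S.add w f = w) (hfg : S.add f g = f) :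
    S.add w g = w := by
  rw [← hwf, ← S.add_assoc, hfg]

theorem e_add_e_self (x : A) : S.add (S.e x) (S.e x) = S.e x :=
  S.e_max x (S.e x) (S.add_e x)

theorem e_e (x : A) : S.e (S.e x) = S.e x := by
  have h := S.e_max (S.e x) (S.e x) (S.e_add_e_self x)
  rwa [S.add_comm, S.add_e, eq_comm] at h

end Assembly

namespace Solid

variable {A : Type*} (S : Solid A)

theorem zero_le_e (a : A) : S.le S.zero (S.e a) :=
  (S.le_e a S.zero (by rw [S.add_comm, S.add_zero])).1

theorem e_add_e_of_le {a b : A} (h : S.le (S.e a) (S.e b)) :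
    S.add (S.e b) (S.e a) = S.e b := by
  apply S.le_antisymm
  · have h' := S.add_le_add _ _ (S.e b) h
    rwa [S.e_add_e_self, S.add_comm] at h'
  · have h' := S.add_le_add _ _ (S.e b) (S.zero_le_e a)
    rwa [S.add_comm S.zero, S.add_zero, S.add_comm (S.e a)] at h'

theorem e_e_mul (x y : A) : S.e (S.mul (S.e x) y) = S.mul (S.e x) y := by
  obtain ⟨t, ht⟩ := S.escala x y
  rw [ht, S.e_e]

theorem mul_add_e_mul (x y : A) : S.add (S.mul x y) (S.mul (S.e x) y) = S.mul x y := by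
  refine S.add_eq_left_trans (S.add_e (S.mul x y)) ?_
  rw [S.e_mul, S.add_comm (S.mul (S.e x) y), ← S.add_assoc, ← S.e_e_mul x y,
    S.e_add_e_self]

theorem e_mul_add_e_mul_e (x y : A) :
    S.add (S.mul (S.e x) y) (S.mul (S.e x) (S.e y)) = S.mul (S.e x) y := by
  have h := S.e_mul (S.e x) y
  rwa [S.e_e_mul, S.e_e, S.mul_comm (S.e y), eq_comm] at h

theorem e_mul_e_add_e_mul_e_of_le (x : A) {y z : A} (h : S.le (S.e z) (S.e y)) :
    S.add (S.mul (S.e x) (S.e y)) (S.mul (S.e x) (S.e z)) = S.mul (S.e x) (S.e y) := by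
  have hamp := S.amplification x (S.e z) (S.e y) (by rw [S.e_e]; exact S.le_refl _) h
  rw [← S.e_e_mul x (S.e y), ← S.e_e_mul x (S.e z)] at hamp ⊢
  exact S.e_add_e_of_le hamp

end Solid

theorem stmt15 {A : Type*} (S : Solid A) (x y z : A)
    (h : S.le (S.e z) (S.e y)) :
    S.mul x (S.add y (S.e z)) = S.add (S.mul x y) (S.mul x (S.e z)) := by
  have hy : S.add y (S.e z) = y := S.add_eq_left_trans (S.add_e y) (S.e_add_e_of_le h)
  have hxy : S.add (S.mul x y) (S.mul (S.e x) (S.e z)) = S.mul x y :=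
    S.add_eq_left_trans (S.mul_add_e_mul x y) <|
      S.add_eq_left_trans (S.e_mul_add_e_mul_e x y) (S.e_mul_e_add_e_mul_e_of_le x h)
  have hdist := S.dist x y (S.e z)
  rw [hy, S.mul_add_e_mul, hxy] at hdist
  rw [hy, hdist]
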